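/- Let Ψ : ℝ³ → ℝ⁴ be the map Ψ(ρ, φ, θ) = (sin θ·cos φ, sin θ·sin φ, 4cos θ, (3/8)ρ). Then at every point of the form (0, φ, θ) (i.e. with ρ = 0), the pullback of the 1-form α under Ψ equals (1/2)sin²θ·dφ + 3cos θ·dρ: for every (v_ρ, v_φ, v_θ) ∈ ℝ³, α_{Ψ(0,φ,θ)}((fderiv ℝ Ψ (0, φ, θ))(v_ρ, v_φ, v_θ)) = (1/2)sin²θ·v_φ + 3cos θ·v_ρ. -/

import Mathlib

noncomputable section

open Real

/-- The 1-form `α = (1/2)x dy - (1/2)y dx + 2z dw + w dz`. -/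
def αW (p v : Fin 4 → ℝ) : ℝ :=
  (1 / 2) * p 0 * v 1 - (1 / 2) * p 1 * v 0 + 2 * p 2 * v 3 + p 3 * v 2

/-- The coordinate change `Ψ(ρ, φ, θ) = (sin θ cos φ, sin θ sin φ, 4cos θ, (3/8)ρ)`
relating the Weinstein model to the Fish–Siefring model. -/
def ΨW (q : Fin 3 → ℝ) : Fin 4 → ℝ :=
  ![Real.sin (q 2) * Real.cos (q 1), Real.sin (q 2) * Real.sin (q 1),
    4 * Real.cos (q 2), (3 / 8) * q 0]

/-- Projection CLM. -/
def PW (i : Fin 3) : (Fin 3 → ℝ) →L[ℝ] ℝ := ContinuousLinearMap.proj i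

/-- Explicit derivative of ΨW at q. -/
def LW (q : Fin 3 → ℝ) : (Fin 3 → ℝ) →L[ℝ] (Fin 4 → ℝ) :=
  ContinuousLinearMap.pi
    ![Real.sin (q 2) • ((-Real.sin (q 1)) • PW 1) + Real.cos (q 1) • (Real.cos (q 2) • PW 2),
      Real.sin (q 2) • (Real.cos (q 1) • PW 1) + Real.sin (q 1) • (Real.cos (q 2) • PW 2),
      (4 : ℝ) • ((-Real.sin (q 2)) • PW 2),
      (3 / 8 : ℝ) • PW 0]

lemma hasFDerivAt_ΨW (q : Fin 3 → ℝ) : HasFDerivAt ΨW (LW q) q := by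
  have h1 : HasFDerivAt (fun p : Fin 3 → ℝ => p 1) (PW 1) q :=
    (PW 1).hasFDerivAt
  have h2 : HasFDerivAt (fun p : Fin 3 → ℝ => p 2) (PW 2) q :=
    (PW 2).hasFDerivAt
  have h0' : HasFDerivAt (fun p : Fin 3 → ℝ => p 0) (PW 0) q :=
    (PW 0).hasFDerivAt
  rw [hasFDerivAt_pi']
  intro i
  fin_cases i
  · have := (h2.sin.mul h1.cos)
    convert this using 2
    all_goals rfl
  · have := (h2.sin.mul h1.sin)
    convert this using 2
    all_goals rfl
  · have := (h2.cos.const_mul (4 : ℝ))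
    convert this using 2
    all_goals rfl
  · have := (h0'.const_mul (3 / 8 : ℝ))
    convert this using 2
    all_goals rfl

/-- At every point with `ρ = 0`, the pullback of the 1-form `α` under `Ψ` equals
`(1/2)sin²θ dφ + 3cos θ dρ`. -/
theorem pullback_alpha_fish_siefring (φ θ : ℝ) (v : Fin 3 → ℝ) :
    αW (ΨW ![0, φ, θ]) (fderiv ℝ ΨW ![0, φ, θ] v) =
      (1 / 2) * Real.sin θ ^ 2 * v 1 + 3 * Real.cos θ * v 0 := by
  rw [(hasFDerivAt_ΨW ![0, φ, θ]).fderiv]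
  simp [αW, ΨW, LW, PW, ContinuousLinearMap.pi_apply]
  have h := Real.sin_sq_add_cos_sq φ
  linear_combination ((1/2) * Real.sin θ ^ 2 * v 1) * h
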